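/- Let v, v̄, u be nonempty rich words such that v·v̄·u is a unique rich extension of v·v̄ and v̄ = lpps(v·v̄). If |u| ≤ |v| then the reversal of u is a suffix of v; if |u| ≥ |v| then the reversal of v is a prefix of u. -/

import Mathlib

def Rich {A : Type*} (w : List A) : Prop :=
  {p : List A | p.reverse = p ∧ p <:+: w}.ncard = w.length + 1
/-- `v` can be extended (to a rich word) in at least two ways. -/
def TwoWays {A : Type*} (v : List A) : Prop :=
  ∃ x y : A, x ≠ y ∧ Rich (v ++ [x]) ∧ Rich (v ++ [y])
/-- `u` is a unique rich extension of `w`. -/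
def UniqueRichExt {A : Type*} (w u : List A) : Prop :=
  Rich u ∧ w <+: u ∧ ∀ v : List A, w <+: v → v <+: u → v ≠ u → ¬ TwoWays v
/-- `p` is the longest proper palindromic suffix of `w`. -/
def IsLPPS {A : Type*} (w p : List A) : Prop :=
  p.reverse = p ∧ p <:+ w ∧ p ≠ w ∧
    ∀ q : List A, q.reverse = q → q <:+ w → q ≠ w → q.length ≤ p.length

/-!
If `p` is the longest proper palindromic suffix of a rich word `s ++ p`, then `s ++ p ++ s.reverse`
is rich again: the letter `c` appended next completes the palindrome `c :: (p ++ [c])`, which is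
new because in a rich word the longest proper palindromic suffix occurs only as a prefix or a
suffix. That last fact rests on two properties of rich words: the longest palindromic suffix is
unioccurrent, and complete returns to palindromes are palindromes.

Hence `v ++ vb` is continued richly both by `u` and by `v.reverse`. Since no proper intermediate
prefix of the unique rich extension `v ++ vb ++ u` has two rich one-letter extensions, the two
continuations agree letter by letter as long as both last.
-/

section

open List

variable {A : Type*}

def palFactors (w : List A) : Set (List A) := {p | p.reverse = p ∧ p <:+: w}

def IsLPS (w p : List A) : Prop :=
  p.reverse = p ∧ p <:+ w ∧ ∀ q : List A, q.reverse = q → q <:+ w → q.length ≤ p.length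

theorem rich_iff {w : List A} : Rich w ↔ (palFactors w).ncard = w.length + 1 := Iff.rfl

theorem palFactors_finite (w : List A) : (palFactors w).Finite :=
  (List.finite_toSet w.sublists).subset fun _ hq => by simpa using hq.2.sublist

theorem prefix_of_suffix_of_reverse_eq {r p : List A} (hr : r.reverse = r) (hp : p.reverse = p)
    (h : r <:+ p) : r <+: p := by
  simpa [hr, hp] using reverse_prefix.2 h

theorem suffix_of_prefix_of_reverse_eq {r p : List A} (hr : r.reverse = r) (hp : p.reverse = p)
    (h : r <+: p) : r <:+ p := by
  simpa [hr, hp] using reverse_suffix.2 h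

theorem suffix_of_mem_palFactors_concat_sdiff {w q : List A} {c : A}
    (hq : q ∈ palFactors (w ++ [c]) \ palFactors w) : q <:+ w ++ [c] :=
  (infix_concat_iff.1 hq.1.2).resolve_right fun h => hq.2 ⟨hq.1.1, h⟩

/-- A new palindromic factor of `w ++ [c]` is a suffix; of two of them the shorter is a prefix,
hence a factor of `w`, of the longer. -/
theorem palFactors_concat_sdiff_subsingleton (w : List A) (c : A) :
    (palFactors (w ++ [c]) \ palFactors w).Subsingleton := by
  intro q₁ h₁ q₂ h₂
  wlog hlen : q₁.length ≤ q₂.length generalizing q₁ q₂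
  · exact (this h₂ h₁ (by omega)).symm
  have hsuf₁ := suffix_of_mem_palFactors_concat_sdiff h₁
  have hsuf₂ := suffix_of_mem_palFactors_concat_sdiff h₂
  have hpre : q₁ <+: q₂ :=
    prefix_of_suffix_of_reverse_eq h₁.1.1 h₂.1.1 (suffix_of_suffix_length_le hsuf₁ hsuf₂ hlen)
  rcases suffix_concat_iff.1 hsuf₂ with rfl | ⟨t, rfl, ht⟩
  · exact (h₂.2 ⟨rfl, nil_infix⟩).elim
  rcases prefix_concat_iff.1 hpre with h | h
  · exact h
  · exact (h₁.2 ⟨h₁.1.1, h.isInfix.trans ht.isInfix⟩).elim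

theorem ncard_palFactors_concat_le (w : List A) (c : A) :
    (palFactors (w ++ [c])).ncard ≤ (palFactors w).ncard + 1 := by
  have h := Set.ncard_le_ncard_sdiff_add_ncard (palFactors (w ++ [c])) _ (palFactors_finite w)
  have h₁ := (Set.ncard_le_one ((palFactors_concat_sdiff_subsingleton w c).finite)).2
    (palFactors_concat_sdiff_subsingleton w c)
  omega

theorem ncard_palFactors_le (w : List A) : (palFactors w).ncard ≤ w.length + 1 := by
  induction w using List.reverseRecOn with
  | nil =>
    have h : palFactors ([] : List A) = {[]} := by
      ext q
      simp only [palFactors, infix_nil, Set.mem_ofPred_eq, Set.mem_singleton_iff]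
      exact ⟨And.right, fun h => ⟨by simp [h], h⟩⟩
    simp [h]
  | append_singleton w c ih =>
    have := ncard_palFactors_concat_le w c
    simp only [length_append, length_singleton]
    omega

theorem Rich.of_concat {w : List A} {c : A} (h : Rich (w ++ [c])) : Rich w := by
  have h₁ := ncard_palFactors_concat_le w c
  have h₂ := ncard_palFactors_le w
  rw [rich_iff, length_append, length_singleton] at h
  rw [rich_iff]
  omega

theorem Rich.of_prefix {w u : List A} (hu : Rich u) (h : w <+: u) : Rich w := by
  obtain ⟨t, rfl⟩ := h
  induction t using List.reverseRecOn with
  | nil => simpa using hu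
  | append_singleton t c ih => exact ih (Rich.of_concat (by simpa using hu))

theorem Rich.concat_of_not_infix {w q : List A} {c : A} (h : Rich w) (hq : q.reverse = q)
    (hqs : q <:+ w ++ [c]) (hnew : ¬ q <:+: w) : Rich (w ++ [c]) := by
  have hins : insert q (palFactors w) ⊆ palFactors (w ++ [c]) := by
    rintro r (rfl | ⟨hr, hrw⟩)
    · exact ⟨hq, hqs.isInfix⟩
    · exact ⟨hr, hrw.trans (prefix_append w [c]).isInfix⟩
  have h₁ := Set.ncard_insert_of_notMem (fun h => hnew h.2) (palFactors_finite w)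
  have h₂ := Set.ncard_le_ncard hins (palFactors_finite _)
  have h₃ := ncard_palFactors_le (w ++ [c])
  rw [rich_iff] at h ⊢
  rw [length_append, length_singleton] at h₃ ⊢
  omega

theorem exists_isLPS (w : List A) : ∃ p, IsLPS w p := by
  obtain ⟨p, ⟨hp, hpw⟩, hmax⟩ := Set.exists_max_image {q : List A | q.reverse = q ∧ q <:+ w}
    length ((palFactors_finite w).subset fun _ hq => ⟨hq.1, hq.2.isInfix⟩) ⟨[], rfl, nil_suffix⟩
  exact ⟨p, hp, hpw, fun q hq hqw => hmax q ⟨hq, hqw⟩⟩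

/-- Otherwise every palindromic factor of `w ++ [c]` would already be a factor of `w`. -/
theorem IsLPS.not_infix_of_rich {w p : List A} {c : A} (hp : IsLPS (w ++ [c]) p)
    (h : Rich (w ++ [c])) : ¬ p <:+: w := by
  intro hpw
  obtain ⟨hpal, hsuf, hmax⟩ := hp
  have hsub : palFactors (w ++ [c]) ⊆ palFactors w := by
    rintro r ⟨hr, hrw⟩
    refine ⟨hr, ?_⟩
    rcases infix_concat_iff.1 hrw with hrs | hinf
    · exact (prefix_of_suffix_of_reverse_eq hr hpal
        (suffix_of_suffix_length_le hrs hsuf (hmax r hr hrs))).isInfix.trans hpw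
    · exact hinf
  have h₁ := Set.ncard_le_ncard hsub (palFactors_finite w)
  have h₂ := ncard_palFactors_le w
  rw [rich_iff, length_append, length_singleton] at h
  omega

/-- `hocc` says that `u` is a complete return to `p`. -/
theorem reverse_eq_self_of_rich_of_complete_return {u p : List A} (hu : Rich u)
    (hp : p.reverse = p) (hpre : p <+: u) (hsuf : p <:+ u) (hlt : p.length < u.length)
    (hocc : ∀ x y, u = x ++ p ++ y → x = [] ∨ y = []) : u.reverse = u := by
  obtain ⟨L, hL, hLu, hLmax⟩ := exists_isLPS u
  obtain ⟨g, rfl⟩ : p <+: L :=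
    prefix_of_suffix_of_reverse_eq hp hL (suffix_of_suffix_length_le hsuf hLu (hLmax p hp hsuf))
  obtain ⟨d, hd⟩ := hLu
  rcases eq_or_ne d [] with rfl | hd₀
  · rwa [← hd, nil_append]
  rcases eq_or_ne g [] with rfl | hg₀
  · obtain ⟨u', c, rfl⟩ := (eq_nil_or_concat' u).resolve_left (by rintro rfl; simp at hlt)
    have hpu' : p <+: u' := (prefix_concat_iff.1 hpre).resolve_left (by rintro rfl; simp at hlt)
    simp only [append_nil] at hL hd hLmax
    exact (IsLPS.not_infix_of_rich ⟨hL, ⟨d, hd⟩, hLmax⟩ hu hpu'.isInfix).elim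
  · exact absurd (hocc d g (by rw [← hd, append_assoc])) (by simp [hd₀, hg₀])

theorem IsLPPS.eq_nil_or_eq_nil_of_reverse_eq {w p : List A} (hw : Rich w) (hwpal : w.reverse = w)
    (hp : IsLPPS w p) : ∀ x y, w = x ++ p ++ y → x = [] ∨ y = [] := by
  obtain ⟨hpal, hsuf, -, hmax⟩ := hp
  have hpre : p <+: w := prefix_of_suffix_of_reverse_eq hpal hwpal hsuf
  intro x
  induction hn : x.length using Nat.strong_induction_on generalizing x with
  | _ n ih =>
  intro y hxy
  by_contra! hxy₀
  have hxp : x ++ p <+: w := ⟨y, hxy.symm⟩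
  have hret : (x ++ p).reverse = x ++ p := by
    refine reverse_eq_self_of_rich_of_complete_return (hw.of_prefix hxp) hpal
      (prefix_of_prefix_length_le hpre hxp (by simp)) (suffix_append _ _)
      (by simpa using length_pos_iff.2 hxy₀.1) fun x' y' h' => ?_
    by_contra! h₀
    have hlen : x'.length < n := by
      have := congrArg length h'
      simp only [length_append] at this
      have := length_pos_iff.2 h₀.2
      omega
    simpa [h₀.1, h₀.2] using ih _ hlen x' rfl (y' ++ y) (by rw [hxy, h']; simp)
  have := hmax (x ++ p) hret (suffix_of_prefix_of_reverse_eq hret hwpal hxp)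
    fun h => hxy₀.2 (by simpa [h] using hxy)
  simp only [length_append] at this
  exact hxy₀.1 (length_eq_zero_iff.1 (by omega))

theorem IsLPPS.eq_nil_or_eq_nil {w p x y : List A} (hw : Rich w) (hp : IsLPPS w p)
    (hxy : w = x ++ p ++ y) : x = [] ∨ y = [] := by
  by_cases hwpal : w.reverse = w
  · exact hp.eq_nil_or_eq_nil_of_reverse_eq hw hwpal x y hxy
  right
  by_contra hy
  obtain ⟨y', c, rfl⟩ := (eq_nil_or_concat' y).resolve_left hy
  obtain ⟨hpal, hsuf, -, hmax⟩ := hp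
  subst hxy
  have hLPS : IsLPS (x ++ p ++ y' ++ [c]) p :=
    ⟨hpal, by simpa using hsuf, fun q hq hqs => hmax q hq (by simpa using hqs)
      (by rintro rfl; exact hwpal (by simpa using hq))⟩
  exact hLPS.not_infix_of_rich (by simpa using hw) ⟨x, y', rfl⟩

theorem IsLPPS.append_singleton {s p : List A} {c : A} (hp : IsLPPS (s ++ [c] ++ p) p)
    (hs : s ≠ []) : IsLPPS (s ++ [c] ++ p ++ [c]) (c :: (p ++ [c])) := by
  obtain ⟨hpal, -, -, hmax⟩ := hp
  refine ⟨by simp [hpal], ⟨s, by simp⟩, fun h => hs ?_, fun q hq hqs hqne => ?_⟩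
  · simpa using congrArg length h
  have hlt := lt_of_le_of_ne hqs.length_le (mt hqs.eq_of_length hqne)
  cases Palindrome.iff_reverse_eq.2 hq with
  | nil => simp
  | singleton => simp
  | @cons_concat x r hr =>
    obtain ⟨t, ht, hts⟩ := (suffix_concat_iff.1 hqs).resolve_left (by simp)
    obtain ⟨rfl, -⟩ := append_inj' (show (x :: r) ++ [x] = t ++ [c] from ht) rfl
    have hrs : r <:+ s ++ [c] ++ p := (suffix_cons x r).trans hts
    have := hmax r (Palindrome.iff_reverse_eq.1 hr) hrs (by rintro rfl; simp at hlt)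
    simp only [length_cons, length_append] at this ⊢
    omega

/-- Each appended letter `c` creates the new palindromic suffix `c :: (p ++ [c])`. -/
theorem Rich.append_reverse_of_isLPPS {s p : List A} (h : Rich (s ++ p))
    (hp : IsLPPS (s ++ p) p) : Rich (s ++ p ++ s.reverse) := by
  induction s using List.reverseRecOn generalizing p with
  | nil => simpa using h
  | append_singleton s c ih =>
    have hnew : ¬ c :: (p ++ [c]) <:+: s ++ [c] ++ p := by
      rintro ⟨x, y, hxy⟩
      have := hp.eq_nil_or_eq_nil h (x := x ++ [c]) (y := c :: y) (by rw [← hxy]; simp)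
      simp at this
    have hc : Rich (s ++ [c] ++ p ++ [c]) :=
      h.concat_of_not_infix (q := c :: (p ++ [c])) (by simp [hp.1]) ⟨s, by simp⟩ hnew
    rcases eq_or_ne s [] with rfl | hs
    · simpa using hc
    · have := ih (by simpa using hc) (by simpa using hp.append_singleton hs)
      simp only [append_assoc, cons_append, reverse_append, reverse_singleton] at this ⊢
      exact this

theorem UniqueRichExt.prefix_or_prefix {w u t : List A} (h : UniqueRichExt w (w ++ u))
    (ht : Rich (w ++ t)) : u <+: t ∨ t <+: u := by
  induction u generalizing w t with
  | nil => exact Or.inl nil_prefix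
  | cons a u ih =>
    obtain ⟨hrich, -, huniq⟩ := h
    cases t with
    | nil => exact Or.inr nil_prefix
    | cons b t =>
      obtain rfl : a = b := by
        by_contra hab
        refine huniq w prefix_rfl (prefix_append _ _) (by simp) ⟨a, b, hab, ?_, ?_⟩
        · exact hrich.of_prefix ⟨u, by simp⟩
        · exact ht.of_prefix ⟨t, by simp⟩
      have h' : UniqueRichExt (w ++ [a]) (w ++ [a] ++ u) :=
        ⟨by simpa using hrich, prefix_append _ _, fun v hv hvu hne =>
          huniq v ((prefix_append _ _).trans hv) (by simpa using hvu) (by simpa using hne)⟩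
      simpa using ih h' (by simpa using ht)

theorem prefix_of_prefix_or_prefix {l₁ l₂ : List A} (h : l₁ <+: l₂ ∨ l₂ <+: l₁)
    (hl : l₁.length ≤ l₂.length) : l₁ <+: l₂ :=
  h.elim id fun h => h.eq_of_length_le hl ▸ prefix_rfl

end

theorem stmt10_general {A : Type*} (v vb u : List A)
    (hure : UniqueRichExt (v ++ vb) (v ++ vb ++ u))
    (hlpps : IsLPPS (v ++ vb) vb) :
    (u.length ≤ v.length → u.reverse <:+ v) ∧
    (v.length ≤ u.length → v.reverse <+: u) := by
  have hclosure : Rich (v ++ vb ++ v.reverse) :=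
    (hure.1.of_prefix (List.prefix_append _ _)).append_reverse_of_isLPPS hlpps
  have hcmp := hure.prefix_or_prefix hclosure
  refine ⟨fun hle => ?_, fun hle => ?_⟩
  · simpa using List.reverse_suffix.2 (prefix_of_prefix_or_prefix hcmp (by simpa using hle))
  · exact prefix_of_prefix_or_prefix hcmp.symm (by simpa using hle)

theorem stmt10 {A : Type*} (v vb u : List A)
    (hv : Rich v) (hvb : Rich vb) (hu : Rich u)
    (hvne : v ≠ []) (hvbne : vb ≠ []) (hune : u ≠ [])
    (hure : UniqueRichExt (v ++ vb) (v ++ vb ++ u))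
    (hlpps : IsLPPS (v ++ vb) vb) :
    (u.length ≤ v.length → u.reverse <:+ v) ∧
    (v.length ≤ u.length → v.reverse <+: u) :=
  stmt10_general v vb u hure hlpps
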